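/- R'_m(n+1) ≤ 2 + m·(R'_m(n) - 1): if every m-edge-coloured complete graph on N vertices contains monochromatic cliques A_1,...,A_m of the m colours with total size ≥ n, then every m-edge-coloured complete graph on 2 + m(N-1) vertices contains such cliques with total size ≥ n+1. -/

import Mathlib

/-!
Fix a vertex `v`. By pigeonhole, `N` of the other `1 + m(N-1)` vertices are joined to `v` in one
colour `j`. The hypothesis, applied to the colouring induced on those `N` vertices, gives cliques
of total size `n`, and `v` can be added to the clique of colour `j`.
-/

/-- `A` spans a complete subgraph all of whose edges have colour `i` under the
edge-colouring `c` of the complete graph. -/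
def MonoClique {V : Type*} {m : ℕ} (c : Sym2 V → Fin m) (i : Fin m) (A : Finset V) : Prop :=
  ∀ a ∈ A, ∀ b ∈ A, a ≠ b → c s(a, b) = i

section MonoClique

variable {V W : Type*} {m : ℕ} {c : Sym2 V → Fin m} {i : Fin m}

theorem MonoClique.map {A : Finset W} (f : W ↪ V) (hA : MonoClique (c ∘ Sym2.map f) i A) :
    MonoClique c i (A.map f) := by
  simp only [MonoClique, Finset.mem_map]
  rintro _ ⟨a, ha, rfl⟩ _ ⟨b, hb, rfl⟩ hab
  simpa using hA a ha b hb (ne_of_apply_ne f hab)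

theorem MonoClique.insert [DecidableEq V] {A : Finset V} {v : V} (hA : MonoClique c i A)
    (hv : ∀ a ∈ A, c s(v, a) = i) : MonoClique c i (insert v A) := by
  simp only [MonoClique, Finset.mem_insert]
  rintro a (rfl | ha) b (rfl | hb) hab
  · exact absurd rfl hab
  · exact hv b hb
  · rw [Sym2.eq_swap]; exact hv a ha
  · exact hA a ha b hb hab

end MonoClique

def HasMonoCliques {V : Type*} {m : ℕ} (c : Sym2 V → Fin m) (n : ℕ) : Prop :=
  ∃ A : Fin m → Finset V, (∀ i, MonoClique c i (A i)) ∧ n ≤ ∑ i, (A i).card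

theorem exists_embedding_monochromatic_star {V : Type*} [Fintype V] [DecidableEq V] {m : ℕ}
    (c : Sym2 V → Fin m) (v : V) {N : ℕ} (hV : m * (N - 1) + 1 < Fintype.card V) :
    ∃ (j : Fin m) (f : Fin N ↪ V), ∀ a, f a ≠ v ∧ c s(v, f a) = j := by
  obtain ⟨j, -, hj⟩ := Finset.exists_lt_card_fiber_of_mul_lt_card_of_maps_to
    (s := Finset.univ.erase v) (t := Finset.univ) (f := fun u => c s(v, u)) (n := N - 1)
    (fun _ _ => Finset.mem_univ _)
    (by rw [Finset.card_erase_of_mem (Finset.mem_univ v), Finset.card_univ, Fintype.card_fin,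
      Finset.card_univ]; omega)
  set T := {u ∈ Finset.univ.erase v | c s(v, u) = j}
  let f : Fin N ↪ V := (Fin.castLEEmb (by omega)).trans
    (T.equivFin.symm.toEmbedding.trans (Function.Embedding.subtype _))
  refine ⟨j, f, fun a => ?_⟩
  have hfa : f a ∈ T := (T.equivFin.symm _).2
  simp only [T, Finset.mem_filter, Finset.mem_erase] at hfa
  exact ⟨hfa.1.1, hfa.2⟩

theorem HasMonoCliques.succ_of_map_of_apex {V W : Type*} [DecidableEq V] {m n : ℕ}
    {c : Sym2 V → Fin m} {f : W ↪ V} (hc : HasMonoCliques (c ∘ Sym2.map f) n)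
    {v : V} {j : Fin m} (hf : ∀ a, f a ≠ v ∧ c s(v, f a) = j) :
    HasMonoCliques c (n + 1) := by
  obtain ⟨A, hA, hn⟩ := hc
  have hv : v ∉ (A j).map f := by simpa using fun a _ => (hf a).1
  refine ⟨Function.update (fun i => (A i).map f) j (insert v ((A j).map f)), fun i => ?_, ?_⟩
  · rcases eq_or_ne i j with rfl | hij
    · simpa using ((hA i).map f).insert (by simpa using fun a _ => (hf a).2)
    · simpa [hij] using (hA i).map f
  · have hcard : ∀ i, (Function.update (fun i => (A i).map f) j (insert v ((A j).map f)) i).card =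
        Function.update (fun i => (A i).card) j ((A j).card + 1) i := by
      intro i
      rcases eq_or_ne i j with rfl | hij
      · simp [Finset.card_insert_of_notMem hv]
      · simp [hij]
    rw [Finset.sum_congr rfl fun i _ => hcard i, Finset.sum_update_of_mem (Finset.mem_univ j)]
    rw [Finset.sum_eq_add_sum_sdiff_singleton_of_mem (Finset.mem_univ j)] at hn
    omega

/-- `R'_m(n+1) ≤ 2 + m(R'_m(n) - 1)`: if every `m`-edge-coloured complete graph on `N`
vertices contains monochromatic cliques of the `m` colours with total size at least `n`,
then every `m`-edge-coloured complete graph on `2 + m(N-1)` vertices contains such cliques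
with total size at least `n + 1`. -/
theorem Rprime_multicolour_step (m n N : ℕ)
    (h : ∀ c : Sym2 (Fin N) → Fin m, ∃ A : Fin m → Finset (Fin N),
      (∀ i, MonoClique c i (A i)) ∧ n ≤ ∑ i, (A i).card) :
    ∀ c : Sym2 (Fin (2 + m * (N - 1))) → Fin m, ∃ A : Fin m → Finset (Fin (2 + m * (N - 1))),
      (∀ i, MonoClique c i (A i)) ∧ n + 1 ≤ ∑ i, (A i).card := by
  intro c
  obtain ⟨j, f, hf⟩ := exists_embedding_monochromatic_star c ⟨0, by omega⟩ (N := N)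
    (by rw [Fintype.card_fin]; omega)
  exact HasMonoCliques.succ_of_map_of_apex (h (c ∘ Sym2.map f)) hf
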